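/- arXiv:2305.11274 — 3 statements merged into one kernel-verified Lean document; each statement's English description precedes it below -/
import Mathlib

section
/- In a free group, if an element a is conjugate to the commutator [b,c] of some elements b, c, and b is conjugate to the commutator [a,d] of a and some element d, then a = b = 1. -/
/-!
If `b` lies in the `n`-th term `γₙ` of the lower central series, then `a`, being conjugate to a
commutator with `b`, lies in `γₙ₊₁`, and symmetrically; so `a` and `b` lie in every `γₙ`. Free
groups are residually nilpotent, hence `a = b = 1`.

For residual nilpotence, write `x ≠ 1` as `x_{i₁}^{e₁} ⋯ x_{iₖ}^{eₖ}` with `eⱼ ≠ 0` and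
`iⱼ ≠ iⱼ₊₁`, and let `xᵢ` act on `ℕ → ℤ` by `1 + Nᵢ`, where `Nᵢ` reads position `a + 1` into
position `a` when `i_{a+1} = i` (a truncation of the Magnus map `xᵢ ↦ 1 + Xᵢ`; `Nᵢ² = 0` since
adjacent letters differ). Units congruent to `1` modulo the operators that look `n` steps ahead
form a descending central series, so `γₖ` acts trivially on `Pi.single k 1` at position `0`,
whereas `x` sends it to `e₁ ⋯ eₖ ≠ 0` there.
-/

open scoped commutatorElement

section CongruenceSubgroups

variable {R : Type*} [Ring R] {F : ℕ → AddSubgroup R} [SetLike.GradedMul F]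

lemma mul_sub_one_mem_of_antitone (hF : Antitone F) {n : ℕ} {x y : R}
    (hx : x - 1 ∈ F n) (hy : y - 1 ∈ F n) : x * y - 1 ∈ F n := by
  have hxy : (x - 1) * (y - 1) ∈ F n := hF (Nat.le_add_left n n) (SetLike.mul_mem_graded hx hy)
  have : x * y - 1 = (x - 1) * (y - 1) + (x - 1) + (y - 1) := by noncomm_ring
  rw [this]
  exact add_mem (add_mem hxy hx) hy

def unitsCongrSubgroup (hF : Antitone F) (n : ℕ) : Subgroup Rˣ where
  carrier := {u | (u : R) - 1 ∈ F n ∧ ((u⁻¹ : Rˣ) : R) - 1 ∈ F n}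
  one_mem' := by simp
  mul_mem' hu hv := by
    refine ⟨mul_sub_one_mem_of_antitone hF hu.1 hv.1, ?_⟩
    rw [mul_inv_rev, Units.val_mul]
    exact mul_sub_one_mem_of_antitone hF hv.2 hu.2
  inv_mem' hu := ⟨hu.2, by simpa using hu.1⟩

variable (hF : Antitone F)

lemma antitone_unitsCongrSubgroup : Antitone (unitsCongrSubgroup hF) :=
  fun _ _ hmn _ hu => ⟨hF hmn hu.1, hF hmn hu.2⟩

lemma val_commutatorElement_sub_one_mem {m n : ℕ} {u v : Rˣ}
    (hu : u ∈ unitsCongrSubgroup hF m) (hv : v ∈ unitsCongrSubgroup hF n) :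
    ((⁅u, v⁆ : Rˣ) : R) - 1 ∈ F (m + n) := by
  set D : R := (u - 1) * (v - 1) - (v - 1) * (u - 1)
  have hD : D ∈ F (m + n) :=
    sub_mem (SetLike.mul_mem_graded hu.1 hv.1) (add_comm n m ▸ SetLike.mul_mem_graded hv.1 hu.1)
  have hvu : (v * u)⁻¹ ∈ unitsCongrSubgroup hF 0 :=
    inv_mem (mul_mem (antitone_unitsCongrSubgroup hF (Nat.zero_le n) hv)
      (antitone_unitsCongrSubgroup hF (Nat.zero_le m) hu))
  -- `⁅u, v⁆ - 1 = (u v - v u) (v u)⁻¹` and `u v - v u = D`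
  have hcomm : ((⁅u, v⁆ : Rˣ) : R) - 1 = D + D * (((v * u)⁻¹ : Rˣ) - 1) := by
    have hinv : ((v : R) * u) * ((v * u)⁻¹ : Rˣ) = 1 := by rw [← Units.val_mul, Units.mul_inv]
    rw [commutatorElement_def, show u * v * u⁻¹ * v⁻¹ = u * v * (v * u)⁻¹ by group]
    calc _ = (u : R) * v * ((v * u)⁻¹ : Rˣ) - (v : R) * u * ((v * u)⁻¹ : Rˣ) := by
            rw [hinv, Units.val_mul, Units.val_mul]
      _ = _ := by simp only [D]; noncomm_ring
  rw [hcomm]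
  exact add_mem hD (SetLike.mul_mem_graded (i := m + n) (j := 0) hD hvu.1)

lemma commutatorElement_mem_unitsCongrSubgroup {m n : ℕ} {u v : Rˣ}
    (hu : u ∈ unitsCongrSubgroup hF m) (hv : v ∈ unitsCongrSubgroup hF n) :
    ⁅u, v⁆ ∈ unitsCongrSubgroup hF (m + n) :=
  ⟨val_commutatorElement_sub_one_mem hF hu hv, by
    rw [commutatorElement_inv, add_comm]; exact val_commutatorElement_sub_one_mem hF hv hu⟩

lemma lowerCentralSeries_le_comap_unitsCongrSubgroup {G : Type*} [Group G] (f : G →* Rˣ)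
    (hf : f.range ≤ unitsCongrSubgroup hF 1) (n : ℕ) :
    (⊤ : Subgroup G).lowerCentralSeries n ≤ (unitsCongrSubgroup hF (n + 1)).comap f := by
  induction n with
  | zero => exact fun g _ => hf ⟨g, rfl⟩
  | succ n ih =>
    rw [Subgroup.lowerCentralSeries_succ, Subgroup.commutator_le]
    intro g hg h _
    rw [Subgroup.mem_comap, map_commutatorElement]
    exact commutatorElement_mem_unitsCongrSubgroup hF (ih hg) (hf ⟨h, rfl⟩)

end CongruenceSubgroups

section SquareZero

variable {R : Type*} [Ring R] {N : R}

def unitOneAddOfMulSelfEqZero (hN : N * N = 0) : Rˣ where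
  val := 1 + N
  inv := 1 - N
  val_inv := by rw [show (1 + N) * (1 - N) = 1 - N * N by noncomm_ring, hN, sub_zero]
  inv_val := by rw [show (1 - N) * (1 + N) = 1 - N * N by noncomm_ring, hN, sub_zero]

lemma val_unitOneAddOfMulSelfEqZero_zpow (hN : N * N = 0) (e : ℤ) :
    ((unitOneAddOfMulSelfEqZero hN ^ e : Rˣ) : R) = 1 + e • N := by
  induction e using Int.induction_on with
  | zero => simp
  | succ e ih =>
    rw [zpow_add_one, Units.val_mul, ih]
    change (1 + (e : ℤ) • N) * (1 + N) = _
    rw [add_mul, mul_add, smul_mul_assoc, mul_add, hN, one_mul, one_mul, mul_one]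
    module
  | pred e ih =>
    rw [zpow_sub_one, Units.val_mul, ih]
    change (1 + (-(e : ℤ)) • N) * (1 - N) = _
    rw [add_mul, mul_sub, smul_mul_assoc, mul_sub, hN, one_mul, one_mul, mul_one]
    module

lemma unitOneAddOfMulSelfEqZero_mem {F : ℕ → AddSubgroup R} [SetLike.GradedMul F]
    (hF : Antitone F) (hN : N * N = 0) (h : N ∈ F 1) :
    unitOneAddOfMulSelfEqZero hN ∈ unitsCongrSubgroup hF 1 :=
  ⟨by simpa [unitOneAddOfMulSelfEqZero] using h, by simpa [unitOneAddOfMulSelfEqZero] using h⟩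

end SquareZero

def lookAhead (n : ℕ) : AddSubgroup (Module.End ℤ (ℕ → ℤ)) where
  carrier := {T | ∀ f a, (∀ b, a + n ≤ b → f b = 0) → T f a = 0}
  zero_mem' _ _ _ := rfl
  add_mem' hS hT f a hf := by simp [hS f a hf, hT f a hf]
  neg_mem' hT f a hf := by simp [hT f a hf]

instance : SetLike.GradedMul lookAhead where
  mul_mem {m n S T} hS hT f a hf := hS (T f) a fun b hb => hT f b fun c hc => hf c (by omega)

lemma antitone_lookAhead : Antitone lookAhead :=
  fun _ _ hmn _ hT f a hf => hT f a fun b hb => hf b (by omega)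

section LetterShift

variable {ι : Type*} [DecidableEq ι]

def letterShift (m : List ι) (i : ι) : Module.End ℤ (ℕ → ℤ) :=
  LinearMap.pi fun a => if m[a]? = some i then LinearMap.proj (a + 1) else 0

@[simp] lemma letterShift_apply (m : List ι) (i : ι) (f : ℕ → ℤ) (a : ℕ) :
    letterShift m i f a = if m[a]? = some i then f (a + 1) else 0 := by
  unfold letterShift; split_ifs <;> simp [*]

lemma letterShift_mem_lookAhead (m : List ι) (i : ι) : letterShift m i ∈ lookAhead 1 :=
  fun f a hf => by simp [hf (a + 1) le_rfl]

lemma letterShift_mul_self {m : List ι} (hm : m.IsChain (· ≠ ·)) (i : ι) :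
    letterShift m i * letterShift m i = 0 := by
  ext f a
  simp only [Module.End.mul_apply, letterShift_apply, LinearMap.zero_apply, Pi.zero_apply]
  split_ifs with ha ha' <;> try rfl
  obtain ⟨ha, rfl⟩ := List.getElem?_eq_some_iff.mp ha
  obtain ⟨ha', hi⟩ := List.getElem?_eq_some_iff.mp ha'
  exact absurd hi.symm (hm.getElem a ha')

-- The only way from position `c` to `c + L.length` uses each factor for exactly one step.
lemma prod_one_add_smul_letterShift_single (m : List ι) (L : List (ι × ℤ)) (c : ℕ)
    (hL : L.map Prod.fst <+: m.drop c) :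
    (∀ a < c, (L.map fun s => 1 + s.2 • letterShift m s.1).prod
        (Pi.single (c + L.length) 1) a = 0) ∧
      (L.map fun s => 1 + s.2 • letterShift m s.1).prod (Pi.single (c + L.length) 1) c
        = (L.map Prod.snd).prod := by
  induction L generalizing c with
  | nil => simp +contextual [Nat.ne_of_lt]
  | cons s L ih =>
    obtain ⟨hc, hL⟩ : m[c]? = some s.1 ∧ L.map Prod.fst <+: m.drop (c + 1) := by
      obtain ⟨t, ht⟩ := hL
      refine ⟨by rw [← add_zero c, ← List.getElem?_drop, ← ht]; rfl, t, ?_⟩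
      rw [← List.drop_drop, ← ht]; rfl
    obtain ⟨ih₁, ih₂⟩ := ih (c + 1) hL
    rw [List.length_cons, ← add_assoc, add_right_comm c]
    simp only [List.map_cons, List.prod_cons, Module.End.mul_apply, LinearMap.add_apply,
      Module.End.one_apply, LinearMap.smul_apply, Pi.add_apply, Pi.smul_apply, letterShift_apply]
    refine ⟨fun a ha => ?_, ?_⟩
    · rw [ih₁ a (by omega), ih₁ (a + 1) (by omega)]; simp
    · rw [ih₁ c (by omega), if_pos hc, ih₂]; simp


variable {m : List ι} (hm : m.IsChain (· ≠ ·))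

noncomputable def magnusRep : FreeGroup ι →* (Module.End ℤ (ℕ → ℤ))ˣ :=
  FreeGroup.lift fun i => unitOneAddOfMulSelfEqZero (letterShift_mul_self hm i)

lemma range_magnusRep_le : (magnusRep hm).range ≤ unitsCongrSubgroup antitone_lookAhead 1 :=
  FreeGroup.range_lift_le <| Set.range_subset_iff.mpr fun i =>
    unitOneAddOfMulSelfEqZero_mem _ _ (letterShift_mem_lookAhead m i)

lemma val_magnusRep_prod_zpow (L : List (ι × ℤ)) :
    (magnusRep hm (L.map fun s => FreeGroup.of s.1 ^ s.2).prod : Module.End ℤ (ℕ → ℤ))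
      = (L.map fun s => 1 + s.2 • letterShift m s.1).prod := by
  induction L with
  | nil => simp
  | cons s L ih =>
    rw [List.map_cons, List.prod_cons, map_mul, Units.val_mul, ih, map_zpow, magnusRep,
      FreeGroup.lift_apply_of, val_unitOneAddOfMulSelfEqZero_zpow, List.map_cons, List.prod_cons]

end LetterShift

lemma FreeGroup.exists_eq_prod_zpow {ι : Type*} (x : FreeGroup ι) :
    ∃ L : List (ι × ℤ), (L.map Prod.fst).IsChain (· ≠ ·) ∧ (∀ s ∈ L, s.2 ≠ 0) ∧
      x = (L.map fun s => FreeGroup.of s.1 ^ s.2).prod := by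
  classical
  set W := Monoid.CoprodI.Word.equiv (freeGroupEquivCoprodI x)
  refine ⟨W.toList.map fun s => (s.1, FreeGroup.freeGroupUnitEquivInt s.2), ?_, ?_, ?_⟩
  · simpa [List.map_map, List.isChain_map] using W.chain_ne
  · simp only [List.mem_map]
    rintro _ ⟨s, hs, rfl⟩ (h0 : FreeGroup.freeGroupUnitEquivInt s.2 = 0)
    apply W.ne_one s hs
    rw [← FreeGroup.freeGroupUnitEquivInt.symm_apply_apply s.2, h0]
    simp [FreeGroup.freeGroupUnitEquivInt]
  · have hx : x = freeGroupEquivCoprodI.symm W.prod := by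
      change x = freeGroupEquivCoprodI.symm (Monoid.CoprodI.Word.equiv.symm W)
      rw [Equiv.symm_apply_apply, MulEquiv.symm_apply_apply]
    rw [hx, Monoid.CoprodI.Word.prod, map_list_prod, List.map_map, List.map_map]
    congr 1
    refine List.map_congr_left fun s _ => ?_
    obtain ⟨i, g⟩ := s
    obtain ⟨e, rfl⟩ := FreeGroup.freeGroupUnitEquivInt.symm.surjective g
    change freeGroupEquivCoprodI.symm (Monoid.CoprodI.of (FreeGroup.of () ^ e)) =
      FreeGroup.of i ^ FreeGroup.freeGroupUnitEquivInt (FreeGroup.freeGroupUnitEquivInt.symm e)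
    rw [Equiv.apply_symm_apply]
    simp

theorem FreeGroup.eq_one_of_forall_mem_lowerCentralSeries {ι : Type*} {x : FreeGroup ι}
    (hx : ∀ n, x ∈ (⊤ : Subgroup (FreeGroup ι)).lowerCentralSeries n) : x = 1 := by
  classical
  obtain ⟨L, hchain, hL0, rfl⟩ := x.exists_eq_prod_zpow
  by_contra hx1
  have hk : L.length ≠ 0 := by
    rintro hk
    exact hx1 (by simp [List.length_eq_zero_iff.mp hk])
  set T : Module.End ℤ (ℕ → ℤ) := ↑(magnusRep hchain (L.map fun s => FreeGroup.of s.1 ^ s.2).prod)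
  have hT : T - 1 ∈ lookAhead (L.length + 1) :=
    (lowerCentralSeries_le_comap_unitsCongrSubgroup _ _ (range_magnusRep_le hchain) _
      (hx L.length)).1
  have hvanish : T (Pi.single L.length 1) 0 = 0 := by
    simpa [Pi.single_apply, hk.symm, sub_eq_zero] using
      hT (Pi.single L.length 1) 0 fun b hb => Pi.single_eq_of_ne (by omega) _
  have hcoeff : T (Pi.single L.length 1) 0 = (L.map Prod.snd).prod := by
    simpa [T, val_magnusRep_prod_zpow] using
      (prod_one_add_smul_letterShift_single (L.map Prod.fst) L 0 (by simp)).2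
  refine List.prod_ne_zero (fun h0 => ?_) (hcoeff ▸ hvanish)
  obtain ⟨s, hs, h⟩ := List.mem_map.mp h0
  exact hL0 s hs h

lemma Subgroup.mem_lowerCentralSeries_succ_of_isConj {G : Type*} [Group G] {x y z : G} {n : ℕ}
    (h : IsConj x (y⁻¹ * z⁻¹ * y * z)) (hy : y ∈ (⊤ : Subgroup G).lowerCentralSeries n) :
    x ∈ (⊤ : Subgroup G).lowerCentralSeries (n + 1) := by
  have hc : y⁻¹ * z⁻¹ * y * z ∈ (⊤ : Subgroup G).lowerCentralSeries (n + 1) := by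
    simpa [commutatorElement_def] using
      Subgroup.commutator_mem_commutator (inv_mem hy) (Subgroup.mem_top z⁻¹)
  obtain ⟨g, rfl⟩ := isConj_iff.mp h.symm
  simpa using (lowerCentralSeries_normal _ (n + 1)).conj_mem _ hc g

/-- In a free group, if an element `a` is conjugate to the commutator
`[b,c] = b⁻¹ * c⁻¹ * b * c` of some elements `b, c`, and `b` is conjugate to the
commutator `[a,d]` of `a` and some element `d`, then `a = b = 1`. -/
theorem stmt1 {ι : Type*} (a b c d : FreeGroup ι)
    (h1 : IsConj a (b⁻¹ * c⁻¹ * b * c))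
    (h2 : IsConj b (a⁻¹ * d⁻¹ * a * d)) :
    a = 1 ∧ b = 1 := by
  have hmem : ∀ n, a ∈ (⊤ : Subgroup (FreeGroup ι)).lowerCentralSeries n ∧
      b ∈ (⊤ : Subgroup (FreeGroup ι)).lowerCentralSeries n := by
    intro n
    induction n with
    | zero => exact ⟨Subgroup.mem_top a, Subgroup.mem_top b⟩
    | succ n ih =>
      exact ⟨Subgroup.mem_lowerCentralSeries_succ_of_isConj h1 ih.2,
        Subgroup.mem_lowerCentralSeries_succ_of_isConj h2 ih.1⟩
  exact ⟨FreeGroup.eq_one_of_forall_mem_lowerCentralSeries fun n => (hmem n).1,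
    FreeGroup.eq_one_of_forall_mem_lowerCentralSeries fun n => (hmem n).2⟩
end

section
/- Let Γ = F ⋊_α ⟨t⟩ be the suspension of α ∈ Aut(F), where F has trivial center. Then Out_fo(Γ), the group of fibre- and orientation-preserving automorphisms of Γ modulo inner automorphisms of Γ, is isomorphic to Z_{Out(F)}([α])/⟨[α]⟩, the centralizer of the class [α] in Out(F) modulo the cyclic subgroup generated by [α]. -/
open SemidirectProduct

/-- The suspension (mapping torus) of an automorphism `α` of a group `F`. -/
abbrev Suspension (F : Type*) [Group F] (α : MulAut F) :=
  F ⋊[zpowersHom (MulAut F) α] Multiplicative ℤ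

/-- The fibre `F` of the suspension, as a subgroup. -/
def fibre (F : Type*) [Group F] (α : MulAut F) : Subgroup (Suspension F α) :=
  (SemidirectProduct.inl : F →* Suspension F α).range

/-- The distinguished element `t` generating the orientation of the suspension. -/
def tEl (F : Type*) [Group F] (α : MulAut F) : Suspension F α :=
  SemidirectProduct.inr (Multiplicative.ofAdd (1 : ℤ))

/-- The subgroup of inner automorphisms of a group. -/
def innAut (G : Type*) [Group G] : Subgroup (MulAut G) :=
  (MulAut.conj : G →* MulAut G).range

instance innAut_normal (G : Type*) [Group G] : (innAut G).Normal := by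
  constructor
  rintro x ⟨g, rfl⟩ φ
  refine ⟨φ g, ?_⟩
  ext y
  show MulAut.conj (φ g) y = φ (MulAut.conj g (φ⁻¹ y))
  simp [MulAut.conj_apply, map_mul, map_inv, mul_assoc]

/-- The group of fibre and orientation preserving automorphisms of the
suspension: automorphisms preserving the fibre `F` setwise and sending `t` into
the coset `tF`. -/
def autFO (F : Type*) [Group F] (α : MulAut F) : Subgroup (MulAut (Suspension F α)) where
  carrier := {φ | (∀ x, x ∈ fibre F α ↔ φ x ∈ fibre F α) ∧
    (tEl F α)⁻¹ * φ (tEl F α) ∈ fibre F α}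
  one_mem' := ⟨fun _ => Iff.rfl, by simpa using (fibre F α).one_mem⟩
  mul_mem' := by
    rintro φ ψ ⟨hφ1, hφ2⟩ ⟨hψ1, hψ2⟩
    refine ⟨fun x => (hψ1 x).trans (hφ1 (ψ x)), ?_⟩
    have key : (tEl F α)⁻¹ * (φ * ψ) (tEl F α) =
        ((tEl F α)⁻¹ * φ (tEl F α)) * φ ((tEl F α)⁻¹ * ψ (tEl F α)) := by
      simp [MulAut.mul_apply, map_mul, mul_assoc]
    rw [key]
    exact mul_mem hφ2 ((hφ1 _).mp hψ2)
  inv_mem' := by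
    rintro φ ⟨hφ1, hφ2⟩
    refine ⟨fun x => ?_, ?_⟩
    · constructor
      · intro hx
        have := (hφ1 (φ⁻¹ x)).mpr
        apply this
        simpa using hx
      · intro hx
        have := (hφ1 (φ⁻¹ x)).mp hx
        simpa using this
    · have h : φ ((tEl F α)⁻¹ * φ⁻¹ (tEl F α)) =
          ((tEl F α)⁻¹ * φ (tEl F α))⁻¹ := by
        simp [map_mul, map_inv, mul_assoc]
      have : φ ((tEl F α)⁻¹ * φ⁻¹ (tEl F α)) ∈ fibre F α := by
        rw [h]; exact inv_mem hφ2
      exact (hφ1 _).mpr this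

/-- The subgroup `⟨[α]⟩` generated by the class of `α` inside the centralizer of
`[α]` in `Out(F) = Aut(F)/Inn(F)`. -/
def zpowersInCentralizer (F : Type*) [Group F] (α : MulAut F) :
    Subgroup ↥(Subgroup.centralizer
      ({((α : MulAut F) : MulAut F ⧸ innAut F)} : Set (MulAut F ⧸ innAut F))) :=
  (Subgroup.zpowers ((α : MulAut F) : MulAut F ⧸ innAut F)).subgroupOf _

instance zpowersInCentralizer_normal (F : Type*) [Group F] (α : MulAut F) :
    (zpowersInCentralizer F α).Normal := by
  constructor
  intro x hx g
  unfold zpowersInCentralizer at hx ⊢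
  rw [Subgroup.mem_subgroupOf] at hx ⊢
  obtain ⟨n, hn⟩ := Subgroup.mem_zpowers_iff.mp hx
  rw [Subgroup.mem_zpowers_iff]
  refine ⟨n, ?_⟩
  have hg : Commute ((α : MulAut F) : MulAut F ⧸ innAut F) (g : MulAut F ⧸ innAut F) :=
    (Subgroup.mem_centralizer_iff.mp g.2 _ (Set.mem_singleton _))
  have hcomm : Commute (((α : MulAut F) : MulAut F ⧸ innAut F) ^ n)
      (g : MulAut F ⧸ innAut F) := hg.zpow_left n
  have hco : ((g * x * g⁻¹ : _) : MulAut F ⧸ innAut F) =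
      (g : MulAut F ⧸ innAut F) * (x : MulAut F ⧸ innAut F) * (g : MulAut F ⧸ innAut F)⁻¹ :=
    rfl
  have hkey : (g : MulAut F ⧸ innAut F) * (((α : MulAut F) : MulAut F ⧸ innAut F) ^ n) *
      (g : MulAut F ⧸ innAut F)⁻¹ = ((α : MulAut F) : MulAut F ⧸ innAut F) ^ n := by
    rw [← hcomm.eq]; group
  rw [hco, ← hn, hkey]

instance innAut_le_autFO_normal (F : Type*) [Group F] (α : MulAut F) :
    ((innAut (Suspension F α)).subgroupOf (autFO F α)).Normal :=
  Subgroup.Normal.subgroupOf (innAut_normal _) _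

/-!
Here `t f t⁻¹ = α f`, Mathlib's convention for `⋊`.  Restriction to the fibre is a homomorphism
`Aut_fo(Γ) → Aut(F)`.  If `φ(t) = g t`, applying `φ` to `t f t⁻¹ = α f` gives
`φ|_F ∘ α = (conj g ∘ α) ∘ φ|_F`, so `[φ|_F]` centralizes `[α]` in `Out(F)`.  Conversely, any `β`
with `β ∘ α = conj g ∘ α ∘ β` extends to the automorphism `f ↦ β f`, `t ↦ g t` of `Γ`, which gives
surjectivity onto the centralizer.  An inner automorphism `conj (f tⁿ)` restricts to
`conj f ∘ αⁿ`; conversely, since `Z(F) = 1`, an element of `Aut_fo(Γ)` restricting to the identity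
has `conj g = 1`, hence `g = 1`, and is the identity.  So the preimage of `⟨[α]⟩` is exactly
`Inn(Γ)`.
-/

theorem Function.Semiconj.mulAut_zpow {N H : Type*} [Mul N] [Mul H] {i : N → H}
    {a : MulAut N} {e : MulAut H} (h : Function.Semiconj i a e) (n : ℤ) :
    Function.Semiconj i ⇑(a ^ n) ⇑(e ^ n) := by
  induction n using Int.induction_on with
  | zero => exact fun _ => rfl
  | succ k ih =>
    rw [zpow_add_one, zpow_add_one]
    exact ih.comp_right h
  | pred k ih =>
    rw [zpow_sub_one, zpow_sub_one]
    exact ih.comp_right (h.inverses_right a.apply_symm_apply e.symm_apply_apply)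

theorem SemidirectProduct.bijective_of_apply_inl_of_right_apply {N G : Type*} [Group N] [Group G]
    {φ : G →* MulAut N} (e : N ⋊[φ] G →* N ⋊[φ] G) (β : MulAut N)
    (hl : ∀ n, e (inl n) = inl (β n)) (hr : ∀ x, (e x).right = x.right) :
    Function.Bijective e := by
  have eq_inl : ∀ x : N ⋊[φ] G, x.right = 1 → x = inl x.left := fun x hx => by
    ext <;> simp [hx]
  refine ⟨(injective_iff_map_eq_one e).mpr fun x hx => ?_, fun y => ?_⟩
  · have hx1 : x.right = 1 := by rw [← hr, hx, one_right]
    rw [eq_inl x hx1, hl, map_eq_one_iff _ inl_injective, map_eq_one_iff _ β.injective] at hx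
    rw [eq_inl x hx1, hx, map_one]
  · set z := y * (e (inr y.right))⁻¹
    have hz : z.right = 1 := by simp [z, hr]
    refine ⟨inl (β.symm z.left) * inr y.right, ?_⟩
    rw [map_mul, hl, MulEquiv.apply_symm_apply, ← eq_inl z hz, inv_mul_cancel_right]

theorem MulAut.conj_eq_one_iff_mem_center {G : Type*} [Group G] {g : G} :
    MulAut.conj g = 1 ↔ g ∈ Subgroup.center G := by
  rw [Subgroup.mem_center_iff, MulEquiv.ext_iff]
  refine forall_congr' fun x => ?_
  rw [MulAut.conj_apply, MulAut.one_apply, mul_inv_eq_iff_eq_mul, eq_comm]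

theorem mk_conj_eq_one {G : Type*} [Group G] (g : G) :
    ((MulAut.conj g : MulAut G) : MulAut G ⧸ innAut G) = 1 :=
  (QuotientGroup.eq_one_iff _).mpr ⟨g, rfl⟩

namespace Suspension

variable {F : Type*} [Group F] {α : MulAut F}

theorem mem_fibre_iff {x : Suspension F α} : x ∈ fibre F α ↔ x.right = 1 := by
  rw [fibre, range_inl_eq_ker_rightHom, MonoidHom.mem_ker, rightHom_eq_right]

theorem eq_inl_left_of_mem_fibre {x : Suspension F α} (hx : x ∈ fibre F α) :
    x = inl x.left := by
  ext <;> simp [mem_fibre_iff.mp hx]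

theorem right_conj (γ x : Suspension F α) : (MulAut.conj γ x).right = x.right := by
  simp only [MulAut.conj_apply, mul_right, inv_right, mul_inv_cancel_comm]

theorem conj_inl_mul_inr (g f : F) (n : Multiplicative ℤ) :
    MulAut.conj (inl g * inr n : Suspension F α) (inl f) =
      inl ((MulAut.conj g * α ^ n.toAdd) f) := by
  ext <;> simp [MulAut.conj_apply, mul_assoc]

theorem conj_inl_mul_tEl (g f : F) :
    MulAut.conj (inl g * tEl F α) (inl f) = inl ((MulAut.conj g * α) f) := by
  rw [tEl, conj_inl_mul_inr, toAdd_ofAdd, zpow_one]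

theorem conj_tEl_inl (f : F) : MulAut.conj (tEl F α) (inl f) = inl (α f) := by
  simpa using conj_inl_mul_tEl (α := α) 1 f

theorem hom_ext {H : Type*} [Group H] {f₁ f₂ : Suspension F α →* H}
    (hinl : ∀ x, f₁ (inl x) = f₂ (inl x)) (htEl : f₁ (tEl F α) = f₂ (tEl F α)) : f₁ = f₂ :=
  SemidirectProduct.hom_ext (MonoidHom.ext hinl) (MonoidHom.ext_mint htEl)

theorem map_fibre_of_mem_autFO {φ : MulAut (Suspension F α)} (hφ : φ ∈ autFO F α) :
    (fibre F α).map (φ : Suspension F α →* Suspension F α) = fibre F α := by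
  refine Subgroup.ext fun x => ⟨?_, fun hx => ⟨φ.symm x, ?_, φ.apply_symm_apply x⟩⟩
  · rintro ⟨y, hy, rfl⟩
    exact (hφ.1 y).mp hy
  · exact (hφ.1 _).mpr (by rwa [MulEquiv.apply_symm_apply])

noncomputable def restrictFibre (φ : autFO F α) : MulAut F :=
  let fibreEquiv : F ≃* fibre F α := MonoidHom.ofInjective inl_injective
  ((fibreEquiv.trans ((φ : MulAut (Suspension F α)).subgroupMap (fibre F α))).trans
    (MulEquiv.subgroupCongr (map_fibre_of_mem_autFO φ.2))).trans fibreEquiv.symm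

theorem inl_restrictFibre_apply (φ : autFO F α) (f : F) :
    inl (restrictFibre φ f) = (φ : MulAut (Suspension F α)) (inl f) := by
  rw [restrictFibre, MulEquiv.trans_apply]
  exact (MonoidHom.apply_ofInjective_symm inl_injective _).trans rfl

variable (α) in
noncomputable def restrictFibreHom : autFO F α →* MulAut F :=
  MonoidHom.mk' restrictFibre fun φ ψ => MulEquiv.ext fun f => inl_injective <| by
    rw [MulAut.mul_apply, inl_restrictFibre_apply, inl_restrictFibre_apply, inl_restrictFibre_apply]
    rfl

section autOfSemiconj

variable {β : MulAut F} {g : F}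

def endOfSemiconj (h : SemiconjBy β α (MulAut.conj g * α)) : Suspension F α →* Suspension F α :=
  lift ((inl : F →* Suspension F α).comp β.toMonoidHom)
    (zpowersHom (Suspension F α) (inl g * tEl F α)) fun n => by
      -- conjugation by `g t` acts on the fibre as `conj g ∘ α`, which `h` intertwines with `α`
      have semiconj_inl : Function.Semiconj (inl : F → Suspension F α) ⇑(MulAut.conj g * α)
          (MulAut.conj (inl g * tEl F α)) := fun f => (conj_inl_mul_tEl g f).symm
      refine MonoidHom.ext fun f => ?_
      simp only [MonoidHom.comp_apply, MulEquiv.coe_toMonoidHom, zpowersHom_apply, map_zpow]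
      rw [← MulAut.mul_apply, h.zpow_right, MulAut.mul_apply, semiconj_inl.mulAut_zpow]

theorem endOfSemiconj_inl (h : SemiconjBy β α (MulAut.conj g * α)) (f : F) :
    endOfSemiconj h (inl f) = inl (β f) :=
  lift_inl _ _ _ f

theorem endOfSemiconj_tEl (h : SemiconjBy β α (MulAut.conj g * α)) :
    endOfSemiconj h (tEl F α) = inl g * tEl F α := by
  simp [endOfSemiconj, tEl]

theorem right_endOfSemiconj (h : SemiconjBy β α (MulAut.conj g * α)) (x : Suspension F α) :
    (endOfSemiconj h x).right = x.right := by
  suffices rightHom.comp (endOfSemiconj h) = rightHom from DFunLike.congr_fun this x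
  refine hom_ext (fun f => ?_) ?_ <;> simp [endOfSemiconj_inl, endOfSemiconj_tEl]

noncomputable def autOfSemiconj (h : SemiconjBy β α (MulAut.conj g * α)) :
    MulAut (Suspension F α) :=
  MulEquiv.ofBijective (endOfSemiconj h)
    (bijective_of_apply_inl_of_right_apply _ β (endOfSemiconj_inl h) (right_endOfSemiconj h))

theorem autOfSemiconj_mem_autFO (h : SemiconjBy β α (MulAut.conj g * α)) :
    autOfSemiconj h ∈ autFO F α := by
  refine ⟨fun x => ?_, ?_⟩
  · simp only [mem_fibre_iff, autOfSemiconj, MulEquiv.ofBijective_apply, right_endOfSemiconj]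
  · rw [mem_fibre_iff, autOfSemiconj, MulEquiv.ofBijective_apply, endOfSemiconj_tEl]
    simp

theorem restrictFibre_autOfSemiconj (h : SemiconjBy β α (MulAut.conj g * α)) :
    restrictFibre ⟨autOfSemiconj h, autOfSemiconj_mem_autFO h⟩ = β :=
  MulEquiv.ext fun f => inl_injective <| by
    rw [inl_restrictFibre_apply]
    exact endOfSemiconj_inl h f

end autOfSemiconj

noncomputable def twist (φ : autFO F α) : F :=
  ((φ : MulAut (Suspension F α)) (tEl F α) * (tEl F α)⁻¹).left

theorem apply_tEl (φ : autFO F α) :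
    (φ : MulAut (Suspension F α)) (tEl F α) = inl (twist φ) * tEl F α := by
  have h : (φ : MulAut (Suspension F α)) (tEl F α) * (tEl F α)⁻¹ ∈ fibre F α := by
    have h_right := mem_fibre_iff.mp φ.2.2
    rw [mul_right, inv_right] at h_right
    rw [mem_fibre_iff, mul_right, inv_right, mul_comm, h_right]
  rw [twist, ← eq_inl_left_of_mem_fibre h, inv_mul_cancel_right]

theorem semiconjBy_restrictFibre (φ : autFO F α) :
    SemiconjBy (restrictFibre φ) α (MulAut.conj (twist φ) * α) :=
  MulEquiv.ext fun f => inl_injective <| by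
    have map_conj : ∀ x y, (φ : MulAut (Suspension F α)) (MulAut.conj x y) =
        MulAut.conj ((φ : MulAut (Suspension F α)) x) ((φ : MulAut (Suspension F α)) y) := by
      simp [MulAut.conj_apply]
    rw [MulAut.mul_apply, MulAut.mul_apply, inl_restrictFibre_apply, ← conj_inl_mul_tEl,
      inl_restrictFibre_apply, ← apply_tEl, ← map_conj, conj_tEl_inl]

theorem restrictFibreHom_injective (hc : Subgroup.center F = ⊥) :
    Function.Injective (restrictFibreHom α) := by
  refine (injective_iff_map_eq_one _).mpr fun φ hφ => ?_
  have h_res : restrictFibre φ = 1 := hφ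
  have h_twist : twist φ = 1 := by
    have h := semiconjBy_restrictFibre φ
    rw [h_res, SemiconjBy, one_mul, mul_one, eq_comm, mul_eq_right,
      MulAut.conj_eq_one_iff_mem_center, hc] at h
    exact Subgroup.mem_bot.mp h
  refine Subtype.ext (MulEquiv.toMonoidHom_injective (hom_ext (fun f => ?_) ?_))
  · simp [← inl_restrictFibre_apply, h_res]
  · simp [apply_tEl, h_twist]

theorem conj_mem_autFO (γ : Suspension F α) : MulAut.conj γ ∈ autFO F α :=
  ⟨fun x => by rw [mem_fibre_iff, mem_fibre_iff, right_conj],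
    by rw [mem_fibre_iff, mul_right, inv_right, right_conj, inv_mul_cancel]⟩

theorem restrictFibre_conj (γ : Suspension F α) :
    restrictFibre ⟨MulAut.conj γ, conj_mem_autFO γ⟩ = MulAut.conj γ.left * α ^ γ.right.toAdd :=
  MulEquiv.ext fun f => inl_injective <| by
    rw [inl_restrictFibre_apply, ← conj_inl_mul_inr, inl_left_mul_inr_right]

variable (α) in
noncomputable def outClass : autFO F α →*
    Subgroup.centralizer {((α : MulAut F) : MulAut F ⧸ innAut F)} :=
  ((QuotientGroup.mk' (innAut F)).comp (restrictFibreHom α)).codRestrict _ fun φ => by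
    have h := congrArg ((↑) : MulAut F → MulAut F ⧸ innAut F) (semiconjBy_restrictFibre φ)
    rwa [QuotientGroup.mk_mul, QuotientGroup.mk_mul, QuotientGroup.mk_mul, mk_conj_eq_one,
      one_mul, ← Subgroup.mem_centralizer_singleton_iff] at h

theorem outClass_surjective : Function.Surjective (outClass α) := by
  rintro ⟨c, hcomm⟩
  obtain ⟨β, rfl⟩ := QuotientGroup.mk_surjective c
  rw [Subgroup.mem_centralizer_singleton_iff, ← QuotientGroup.mk_mul, ← QuotientGroup.mk_mul,
    QuotientGroup.eq_iff_div_mem] at hcomm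
  obtain ⟨g, hg⟩ := hcomm
  have h : SemiconjBy β α (MulAut.conj g * α) := by
    rw [SemiconjBy, hg, mul_assoc, div_mul_cancel]
  refine ⟨⟨autOfSemiconj h, autOfSemiconj_mem_autFO h⟩, Subtype.ext ?_⟩
  exact congrArg QuotientGroup.mk (restrictFibre_autOfSemiconj h)

theorem mem_innAut_iff (hc : Subgroup.center F = ⊥) (φ : autFO F α) :
    (φ : MulAut (Suspension F α)) ∈ innAut (Suspension F α) ↔
      ((restrictFibre φ : MulAut F) : MulAut F ⧸ innAut F) ∈
        Subgroup.zpowers ((α : MulAut F) : MulAut F ⧸ innAut F) := by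
  constructor
  · rintro ⟨γ, hγ⟩
    obtain rfl : ⟨MulAut.conj γ, conj_mem_autFO γ⟩ = φ := Subtype.ext hγ
    rw [restrictFibre_conj, QuotientGroup.mk_mul, mk_conj_eq_one, one_mul, QuotientGroup.mk_zpow]
    exact zpow_mem (Subgroup.mem_zpowers _) _
  · intro h
    obtain ⟨n, hn⟩ := Subgroup.mem_zpowers_iff.mp h
    rw [← QuotientGroup.mk_zpow, eq_comm, QuotientGroup.eq_iff_div_mem] at hn
    obtain ⟨l, hl⟩ := hn
    let γ : Suspension F α := ⟨l, Multiplicative.ofAdd n⟩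
    have h_res : restrictFibreHom α φ = restrictFibreHom α ⟨MulAut.conj γ, conj_mem_autFO γ⟩ := by
      show restrictFibre φ = restrictFibre _
      rw [restrictFibre_conj, toAdd_ofAdd, hl, div_mul_cancel]
    exact ⟨γ, congrArg Subtype.val (restrictFibreHom_injective hc h_res).symm⟩

theorem ker_outClass (hc : Subgroup.center F = ⊥) :
    ((QuotientGroup.mk' (zpowersInCentralizer F α)).comp (outClass α)).ker =
      (innAut (Suspension F α)).subgroupOf (autFO F α) := by
  ext φ
  rw [← MonoidHom.comap_ker, QuotientGroup.ker_mk', Subgroup.mem_comap, zpowersInCentralizer,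
    Subgroup.mem_subgroupOf, Subgroup.mem_subgroupOf, mem_innAut_iff hc]
  rfl

end Suspension

/-- Let `Γ = F ⋊_α ⟨t⟩` be the suspension of `α ∈ Aut(F)`, where `F` has trivial
center.  Then `Out_fo(Γ)`, the group of fibre and orientation preserving
automorphisms of `Γ` modulo inner automorphisms of `Γ`, is isomorphic to
`Z_{Out(F)}([α]) / ⟨[α]⟩`, the centralizer of `[α]` in `Out(F)` modulo the
cyclic subgroup generated by `[α]`. -/
theorem stmt7 {F : Type*} [Group F] (hc : Subgroup.center F = ⊥) (α : MulAut F) :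
    Nonempty
      ((autFO F α ⧸ (innAut (Suspension F α)).subgroupOf (autFO F α)) ≃*
        (Subgroup.centralizer
            ({((α : MulAut F) : MulAut F ⧸ innAut F)} : Set (MulAut F ⧸ innAut F)) ⧸
          zpowersInCentralizer F α)) :=
  ⟨(QuotientGroup.quotientMulEquivOfEq (Suspension.ker_outClass hc).symm).trans
    (QuotientGroup.quotientKerEquivOfSurjective _
      ((QuotientGroup.mk'_surjective _).comp Suspension.outClass_surjective))⟩
end

section
/- The kernel of the reduction map GL_n(ℤ) → GL_n(ℤ/3ℤ) is torsion-free: if A ∈ GL_n(ℤ) satisfies A ≡ I (mod 3) and A^m = I for some m ≥ 1, then A = I. -/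
/-!
The argument works modulo any prime `q ≥ 3`. Write `A = 1 + N` with every entry of `N`
divisible by `q`; passing to a power of `A`, we may assume `A ^ p = 1` with `p` prime.
Expanding `(1 + N) ^ p = 1` gives `p N = -∑_{l ≥ 2} C(p, l) N ^ l`. If `q ^ k` divides every
entry of `N` (`k ≥ 1`), the right-hand side is divisible by `q ^ (2k)`, and even by
`q ^ (2k+1)` when `p = q`, since then `q ∣ C(q, l)` for `l < q` and `q k ≥ 2k + 1` as `q ≥ 3`.
Either way `q ^ (k+1)` divides every entry of `N`, so the entries of `N` are divisible by all
powers of `q`, and `N = 0`.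
-/

open Matrix Finset

section EntrywiseDvd

variable {ι R : Type*} [Fintype ι] [CommSemiring R]

theorem Matrix.dvd_mul_apply_of_forall_dvd {a b : R} {M P : Matrix ι ι R}
    (hM : ∀ i j, a ∣ M i j) (hP : ∀ i j, b ∣ P i j) (i j : ι) : a * b ∣ (M * P) i j :=
  dvd_sum fun x _ => mul_dvd_mul (hM i x) (hP x j)

theorem Matrix.pow_dvd_pow_apply_of_forall_dvd [DecidableEq ι] {a : R} {M : Matrix ι ι R}
    (hM : ∀ i j, a ∣ M i j) (l : ℕ) (i j : ι) : a ^ l ∣ (M ^ l) i j := by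
  induction l generalizing i j with
  | zero => simp
  | succ l ih => rw [pow_succ, pow_succ]; exact dvd_mul_apply_of_forall_dvd ih hM i j

end EntrywiseDvd

theorem one_add_pow_eq_one_add_nsmul_add_sum {R : Type*} [Semiring R] (x : R) (p : ℕ) :
    (1 + x) ^ p = 1 + p • x + ∑ l ∈ range (p - 1), p.choose (l + 2) • x ^ (l + 2) := by
  rcases p with _ | p
  · simp
  rw [add_comm 1 x, (Commute.one_right x).add_pow, sum_range_succ', sum_range_succ']
  simp only [one_pow, mul_one, pow_zero, pow_one, Nat.choose_zero_right, Nat.choose_one_right,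
    Nat.cast_one, ← nsmul_eq_mul', Nat.add_sub_cancel, zero_add]
  abel

section MinkowskiLemma

variable {ι : Type*} [Fintype ι] [DecidableEq ι] {q p : ℕ}

theorem Matrix.natCast_mul_apply_eq_neg_sum_of_one_add_pow_eq_one {R : Type*} [CommRing R]
    {N : Matrix ι ι R} (hNp : (1 + N) ^ p = 1) (i j : ι) :
    (p : R) * N i j = -∑ l ∈ range (p - 1), (p.choose (l + 2) : R) * (N ^ (l + 2)) i j := by
  have h := one_add_pow_eq_one_add_nsmul_add_sum N p
  rw [hNp, add_assoc, left_eq_add] at h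
  have hij := congrArg (· i j) (eq_neg_of_add_eq_zero_left h)
  simp only [Matrix.smul_apply, Matrix.neg_apply, Matrix.sum_apply] at hij
  simpa only [nsmul_eq_mul] using hij

theorem Matrix.pow_succ_dvd_of_one_add_pow_prime_eq_one (hq : q.Prime) (hq3 : 3 ≤ q)
    (hp : p.Prime) {k : ℕ} (hk : 1 ≤ k) {N : Matrix ι ι ℤ} (hN : ∀ i j, (q : ℤ) ^ k ∣ N i j)
    (hNp : (1 + N) ^ p = 1) (i j : ι) : (q : ℤ) ^ (k + 1) ∣ N i j := by
  have hpN := natCast_mul_apply_eq_neg_sum_of_one_add_pow_eq_one hNp i j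
  have hpow (l : ℕ) : (q : ℤ) ^ (k * l) ∣ (N ^ l) i j := by
    rw [pow_mul]
    exact pow_dvd_pow_apply_of_forall_dvd hN l i j
  rcases eq_or_ne q p with rfl | hqp
  · have hterm (l : ℕ) (hl : l < q - 1) :
        (q : ℤ) ^ (2 * k) * q ∣ (q.choose (l + 2) : ℤ) * (N ^ (l + 2)) i j := by
      rcases lt_or_eq_of_le (Nat.le_sub_one_of_lt hl) with hl | rfl
      · rw [mul_comm ((q.choose (l + 2) : ℕ) : ℤ)]
        refine mul_dvd_mul ((pow_dvd_pow _ ?_).trans (hpow _)) ?_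
        · nlinarith
        · exact_mod_cast hq.dvd_choose_self (by omega) (by omega)
      · rw [← pow_succ]
        refine Dvd.dvd.mul_left ((pow_dvd_pow _ ?_).trans (hpow _)) _
        rw [show q - 1 - 1 + 2 = q by omega]
        nlinarith
    have h : (q : ℤ) ^ (2 * k) * q ∣ N i j * q := by
      rw [mul_comm (N i j), hpN, dvd_neg]
      exact dvd_sum fun l hl => hterm l (mem_range.1 hl)
    have h' := (mul_dvd_mul_iff_right (by exact_mod_cast hq.ne_zero)).1 h
    exact (pow_dvd_pow _ (by omega)).trans h'
  · have hcop : IsCoprime ((q : ℤ) ^ (2 * k)) p :=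
      (Nat.isCoprime_iff_coprime.2 ((Nat.coprime_primes hq hp).2 hqp)).pow_left
    have h : (q : ℤ) ^ (2 * k) ∣ p * N i j := by
      rw [hpN, dvd_neg]
      refine dvd_sum fun l _ => Dvd.dvd.mul_left ((pow_dvd_pow _ ?_).trans (hpow _)) _
      nlinarith
    exact (pow_dvd_pow _ (by omega)).trans (hcop.dvd_of_dvd_mul_left h)

theorem Matrix.eq_zero_of_one_add_pow_prime_eq_one (hq : q.Prime) (hq3 : 3 ≤ q) (hp : p.Prime)
    {N : Matrix ι ι ℤ} (hN : ∀ i j, (q : ℤ) ∣ N i j) (hNp : (1 + N) ^ p = 1) : N = 0 := by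
  have hdvd (k : ℕ) : ∀ i j, (q : ℤ) ^ (k + 1) ∣ N i j := by
    induction k with
    | zero => simpa using hN
    | succ k ih => exact pow_succ_dvd_of_one_add_pow_prime_eq_one hq hq3 hp (by omega) ih hNp
  ext i j
  by_contra hne
  obtain ⟨k, hk⟩ := (Int.finiteMultiplicity_iff (a := q)).2 ⟨by simpa using hq.ne_one, hne⟩
  exact hk (hdvd k i j)

namespace Matrix.GeneralLinearGroup

theorem dvd_sub_one_apply_of_map_eq_one {A : GL ι ℤ}
    (hA : map (Int.castRingHom (ZMod q)) A = 1) (i j : ι) :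
    (q : ℤ) ∣ ((A : Matrix ι ι ℤ) - 1) i j := by
  rw [← ZMod.intCast_zmod_eq_zero_iff_dvd]
  have hij := congrArg (fun B : GL ι (ZMod q) => (B : Matrix ι ι (ZMod q)) i j) hA
  simp only [GeneralLinearGroup.map_apply, eq_intCast, Units.val_one, one_apply, sub_apply, Int.cast_sub,
    Int.cast_ite, Int.cast_one, Int.cast_zero] at hij ⊢
  rw [hij, sub_self]

theorem eq_one_of_map_eq_one_of_pow_prime_eq_one (hq : q.Prime) (hq3 : 3 ≤ q) (hp : p.Prime)
    {A : GL ι ℤ} (hA : map (Int.castRingHom (ZMod q)) A = 1) (hAp : A ^ p = 1) : A = 1 := by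
  have hN : (A : Matrix ι ι ℤ) - 1 = 0 := by
    refine eq_zero_of_one_add_pow_prime_eq_one hq hq3 hp (dvd_sub_one_apply_of_map_eq_one hA) ?_
    rw [add_sub_cancel, ← Units.val_pow_eq_pow_val, hAp, Units.val_one]
  exact Units.ext (sub_eq_zero.1 hN)

theorem eq_one_of_map_eq_one_of_pow_eq_one (hq : q.Prime) (hq3 : 3 ≤ q) {A : GL ι ℤ}
    (hA : map (Int.castRingHom (ZMod q)) A = 1) {m : ℕ} (hm : m ≠ 0) (hAm : A ^ m = 1) :
    A = 1 := by
  by_contra hA1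
  have hord : orderOf A ≠ 0 :=
    (orderOf_pos_iff.2 (isOfFinOrder_iff_pow_eq_one.2 ⟨m, Nat.pos_of_ne_zero hm, hAm⟩)).ne'
  obtain ⟨p, hp, hpA⟩ := Nat.exists_prime_and_dvd (orderOf_eq_one_iff.not.2 hA1)
  have hB : orderOf (A ^ (orderOf A / p)) = p := orderOf_pow_orderOf_div hord hpA
  have hB1 : A ^ (orderOf A / p) = 1 :=
    eq_one_of_map_eq_one_of_pow_prime_eq_one hq hq3 hp (by rw [map_pow, hA, one_pow])
      (orderOf_dvd_iff_pow_eq_one.1 hB.dvd)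
  rw [hB1, orderOf_one] at hB
  exact hp.ne_one hB.symm

end Matrix.GeneralLinearGroup

end MinkowskiLemma

/-- Minkowski's theorem: the kernel of the reduction map
`GL_n(ℤ) → GL_n(ℤ/3ℤ)` is torsion-free.  If `A ∈ GL_n(ℤ)` satisfies
`A ≡ I (mod 3)` and `A ^ m = I` for some `m ≥ 1`, then `A = I`. -/
theorem stmt14 (n : ℕ) (A : Matrix.GeneralLinearGroup (Fin n) ℤ)
    (h3 : Matrix.GeneralLinearGroup.map (Int.castRingHom (ZMod 3)) A = 1)
    (m : ℕ) (hm : 1 ≤ m) (hA : A ^ m = 1) :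
    A = 1 :=
  Matrix.GeneralLinearGroup.eq_one_of_map_eq_one_of_pow_eq_one Nat.prime_three le_rfl h3
    (by omega) hA
end
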